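/- arXiv:2502.15209 — 3 statements merged into one kernel-verified Lean document; each statement's English description precedes it below -/
import Mathlib

section
/- Let f : [0,1] → ℝ≥0 × ℝ≥0 be a continuous curve with outward normal direction n(s) ∈ ℝP¹ varying continuously, and suppose the set {n(s) : s ∈ (0,1)} covers all of ℝP¹ (i.e. the normal directions of f attain every direction in the projective line). Then for every (p,q) ∈ ℤ² \ {(0,0)} there exists s ∈ (0,1) such that (p,q) is parallel to n(s). Consequently, there is no continuous family of loops Γ_s on the tori T_s = μ⁻¹(f(s)), s ∈ (0,1), of constant homology class transverse to the linear flows with direction n(s) on every T_s. -/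
/-- The determinant of two vectors in `ℝ²`. -/
def det2 (u v : ℝ × ℝ) : ℝ := u.1 * v.2 - u.2 * v.1

/-- If the (outward normal) directions `v s`, `s ∈ (0,1)`, of the boundary
curve of a toric domain cover all of `ℝP¹` (every nonzero vector is parallel to some
`v s`), then every `(p,q) ∈ ℤ² \ {0}` is parallel to some `v s`; consequently there is no
continuous family of loops on the tori `μ⁻¹(f s)` of constant nonzero homology class
`(p,q)` (encoded by lifts) transverse to the linear flows of direction `v s`. -/
theorem stmt8 (v : ℝ → ℝ × ℝ) (hv : ∀ s ∈ Set.Ioo (0:ℝ) 1, v s ≠ 0)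
    (hvc : ContinuousOn v (Set.Ioo (0:ℝ) 1))
    (hcover : ∀ w : ℝ × ℝ, w ≠ 0 → ∃ s ∈ Set.Ioo (0:ℝ) 1, det2 w (v s) = 0) :
    (∀ p q : ℤ, (p, q) ≠ ((0 : ℤ), (0 : ℤ)) →
      ∃ s ∈ Set.Ioo (0:ℝ) 1, det2 ((p : ℝ), (q : ℝ)) (v s) = 0) ∧
    ¬ ∃ (p q : ℤ) (Γ : ℝ → ℝ → ℝ × ℝ), (p, q) ≠ ((0 : ℤ), (0 : ℤ)) ∧
        (∀ s ∈ Set.Ioo (0:ℝ) 1, Differentiable ℝ (Γ s)) ∧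
        (∀ s ∈ Set.Ioo (0:ℝ) 1, ∀ t : ℝ, Γ s (t + 1) = Γ s t + ((p : ℝ), (q : ℝ))) ∧
        (∀ s ∈ Set.Ioo (0:ℝ) 1, ∀ t : ℝ, det2 (deriv (Γ s) t) (v s) ≠ 0) := by
  have key : ∀ p q : ℤ, (p, q) ≠ ((0 : ℤ), (0 : ℤ)) →
      ∃ s ∈ Set.Ioo (0:ℝ) 1, det2 ((p : ℝ), (q : ℝ)) (v s) = 0 := by
    intro p q hpq
    apply hcover
    intro h
    apply hpq
    have h1 : (p : ℝ) = 0 := congrArg Prod.fst h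
    have h2 : (q : ℝ) = 0 := congrArg Prod.snd h
    have : p = 0 := by exact_mod_cast h1
    have : q = 0 := by exact_mod_cast h2
    simp_all
  refine ⟨key, ?_⟩
  rintro ⟨p, q, Γ, hpq, hdiff, hper, htr⟩
  obtain ⟨s, hs, hdet⟩ := key p q hpq
  -- define the linear functional L u = det2 u (v s)
  set w := v s with hw
  let L : (ℝ × ℝ) →L[ℝ] ℝ :=
    w.2 • (ContinuousLinearMap.fst ℝ ℝ ℝ) - w.1 • (ContinuousLinearMap.snd ℝ ℝ ℝ)
  have hL : ∀ u : ℝ × ℝ, L u = det2 u w := by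
    intro u; simp [L, det2]; ring
  set g : ℝ → ℝ := fun t => L (Γ s t) with hg
  have hgderiv : ∀ t : ℝ, HasDerivAt g (L (deriv (Γ s) t)) t := by
    intro t
    exact (L.hasFDerivAt.comp_hasDerivAt t ((hdiff s hs t).hasDerivAt))
  have hgdiff : Differentiable ℝ g := fun t => (hgderiv t).differentiableAt
  have hg01 : g 0 = g 1 := by
    have := hper s hs 0
    rw [zero_add] at this
    have hd : det2 ((p : ℝ), (q : ℝ)) w = 0 := hdet
    simp only [hg, this, map_add]
    rw [hL ((p : ℝ), (q : ℝ)), hd, add_zero]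
  obtain ⟨c, _, hc⟩ := exists_deriv_eq_zero (f := g) (zero_lt_one)
    (hgdiff.continuous.continuousOn) hg01
  have : deriv g c = L (deriv (Γ s) c) := (hgderiv c).deriv
  exact htr s hs c (by rw [← hL]; rw [← this, hc])
end

section
/- Let v : (a,b) → ℝ² \ {0} be a continuous family of direction vectors and fix (p,q) ∈ ℤ² \ {(0,0)}. Then there exists a continuous family of embedded loops Γ_s ⊂ ℝ²/ℤ², each of homology class (p,q) and each transverse to the constant vector field v(s), if and only if det((p,q), v(s)) ≠ 0 for all s ∈ (a,b). In particular one may take Γ_s to be the fixed straight loop t ↦ (pt, qt)/gcd(p,q) repeated gcd(p,q) times in parallel copies. -/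
/-- Given a continuous family of nonzero direction vectors `v : (a,b) → ℝ²`
and `(p,q) ∈ ℤ² \ {0}`, there exists a continuous family of loops `Γ_s` on the torus
`ℝ²/ℤ²` (encoded by lifts, jointly continuous in `(s,t)`), each of homology class `(p,q)`
and each transverse to the constant field `v s`, if and only if
`det((p,q), v s) ≠ 0` for all `s ∈ (a,b)`. -/
theorem stmt9 (a b : ℝ) (v : ℝ → ℝ × ℝ) (hv : ∀ s ∈ Set.Ioo a b, v s ≠ 0)
    (hvc : ContinuousOn v (Set.Ioo a b)) (p q : ℤ)
    (hpq : (p, q) ≠ ((0 : ℤ), (0 : ℤ))) :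
    (∃ Γ : ℝ → ℝ → ℝ × ℝ,
      ContinuousOn (fun x : ℝ × ℝ => Γ x.1 x.2) (Set.Ioo a b ×ˢ Set.univ) ∧
      (∀ s ∈ Set.Ioo a b, Differentiable ℝ (Γ s)) ∧
      (∀ s ∈ Set.Ioo a b, ∀ t : ℝ, Γ s (t + 1) = Γ s t + ((p : ℝ), (q : ℝ))) ∧
      (∀ s ∈ Set.Ioo a b, ∀ t : ℝ, det2 (deriv (Γ s) t) (v s) ≠ 0)) ↔
    (∀ s ∈ Set.Ioo a b, det2 ((p : ℝ), (q : ℝ)) (v s) ≠ 0) := by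
  constructor
  · rintro ⟨Γ, _, hdiff, hper, htrans⟩ s hs hdet
    -- F t = det2 (Γ s t) (v s)
    set F : ℝ → ℝ := fun t => det2 (Γ s t) (v s) with hF
    have hD : ∀ t : ℝ, HasDerivAt F (det2 (deriv (Γ s) t) (v s)) t := by
      intro t
      have h := (hdiff s hs t).hasDerivAt
      have h1 : HasDerivAt (fun u => (Γ s u).1) (deriv (Γ s) t).1 t := by
        have h1' : HasFDerivAt (fun u => (Γ s u).1)
            ((ContinuousLinearMap.fst ℝ ℝ ℝ).comp
              (ContinuousLinearMap.smulRight (1 : ℝ →L[ℝ] ℝ) (deriv (Γ s) t))) t :=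
          h.hasFDerivAt.fst
        simpa using h1'.hasDerivAt
      have h2 : HasDerivAt (fun u => (Γ s u).2) (deriv (Γ s) t).2 t := by
        have h2' : HasFDerivAt (fun u => (Γ s u).2)
            ((ContinuousLinearMap.snd ℝ ℝ ℝ).comp
              (ContinuousLinearMap.smulRight (1 : ℝ →L[ℝ] ℝ) (deriv (Γ s) t))) t :=
          h.hasFDerivAt.snd
        simpa using h2'.hasDerivAt
      exact (h1.mul_const (v s).2).sub (h2.mul_const (v s).1)
    have hFeq : F 1 = F 0 := by
      have := hper s hs 0
      simp only [zero_add] at this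
      simp [hF, this, det2, hdet]
      simp only [det2] at hdet
      ring_nf
      ring_nf at hdet
      linarith
    have hc : ContinuousOn F (Set.Icc 0 1) :=
      fun t _ => ((hD t).differentiableAt.continuousAt).continuousWithinAt
    obtain ⟨c, _, hc0⟩ := exists_deriv_eq_zero (f := F) (by norm_num : (0:ℝ) < 1) hc hFeq.symm
    have : deriv F c = det2 (deriv (Γ s) c) (v s) := (hD c).deriv
    exact htrans s hs c (this ▸ hc0)
  · intro h
    refine ⟨fun _ t => ((p : ℝ) * t, (q : ℝ) * t), ?_, ?_, ?_, ?_⟩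
    · exact (Continuous.continuousOn (by continuity))
    · intro s _
      intro t
      exact DifferentiableAt.prodMk ((differentiable_id.const_mul _) t) ((differentiable_id.const_mul _) t)
    · intro s _ t
      simp [Prod.ext_iff]; constructor <;> ring
    · intro s hs t
      have hd : HasDerivAt (fun t : ℝ => ((p : ℝ) * t, (q : ℝ) * t)) ((p : ℝ), (q : ℝ)) t := by
        have h1 : HasDerivAt (fun t : ℝ => (p : ℝ) * t) (p : ℝ) t := by
          simpa using (hasDerivAt_id t).const_mul (p : ℝ)
        have h2 : HasDerivAt (fun t : ℝ => (q : ℝ) * t) (q : ℝ) t := by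
          simpa using (hasDerivAt_id t).const_mul (q : ℝ)
        exact h1.prodMk h2
      rw [hd.deriv]
      exact h s hs
end

section
/- In a bipartite planar multigraph setting modeling a broken torus: let G be a finite connected planar multigraph embedded in S², with faces 2-colored (classes '−' and '+') such that adjacent faces have different colors, and assign an integer q(F) to each face F. If the totals agree, Σ_{F in class −} q(F) = Σ_{F in class +} q(F), then there exists an assignment of integers x(e) to the edges e of G such that for every face F, Σ_{e ∈ ∂F} x(e) = q(F). -/
private lemma transfer (E F : Type) [Fintype E] [Fintype F] [DecidableEq F]
    (col : F → Bool) (m : F → E → ℕ)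
    (hedge : ∀ e : E, ∃ F₁ F₂ : F, F₁ ≠ F₂ ∧ col F₁ ≠ col F₂ ∧
      m F₁ e = 1 ∧ m F₂ e = 1 ∧ ∀ G : F, G ≠ F₁ → G ≠ F₂ → m G e = 0)
    (A B : F)
    (h : Relation.ReflTransGen (fun A B : F => ∃ e : E, m A e ≠ 0 ∧ m B e ≠ 0) A B)
    (c : ℤ) :
    ∃ x : E → ℤ, ∀ G : F, ∑ e : E, (m G e : ℤ) * x e =
      (if G = A then c else 0) + (if G = B then (if col B = col A then -c else c) else 0) := by
  classical
  induction h with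
  | refl =>
    refine ⟨0, fun G => by by_cases hG : G = A <;> simp [hG]⟩
  | @tail B' B hAB' hrel ih =>
    obtain ⟨x₀, hx₀⟩ := ih
    by_cases hBB' : B = B'
    · subst hBB'; exact ⟨x₀, hx₀⟩
    · obtain ⟨e, hB'e, hBe⟩ := hrel
      obtain ⟨F₁, F₂, h12, hcol12, h1, h2, hz⟩ := hedge e
      have hB' : B' = F₁ ∨ B' = F₂ := by
        by_contra hcon; push_neg at hcon; exact hB'e (hz _ hcon.1 hcon.2)
      have hB : B = F₁ ∨ B = F₂ := by
        by_contra hcon; push_neg at hcon; exact hBe (hz _ hcon.1 hcon.2)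
      have key : m B' e = 1 ∧ m B e = 1 ∧ col B' ≠ col B ∧
          ∀ G : F, G ≠ B' → G ≠ B → m G e = 0 := by
        rcases hB' with h' | h' <;> rcases hB with h'' | h'' <;> subst h' <;> subst h''
        · exact absurd rfl hBB'
        · exact ⟨h1, h2, hcol12, fun G hG hG' => hz G hG hG'⟩
        · exact ⟨h2, h1, hcol12.symm, fun G hG hG' => hz G hG' hG⟩
        · exact absurd rfl hBB'
      obtain ⟨mB', mB, hcolBB', hzero⟩ := key
      set s : ℤ := if col B' = col A then -c else c with hs
      refine ⟨fun e' => x₀ e' + (if e' = e then -s else 0), fun G => ?_⟩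
      have hsplit : ∑ e' : E, (m G e' : ℤ) * (x₀ e' + (if e' = e then -s else 0))
          = (∑ e' : E, (m G e' : ℤ) * x₀ e') + (m G e : ℤ) * (-s) := by
        simp only [mul_add, Finset.sum_add_distrib]
        congr 1
        rw [Finset.sum_eq_single e]
        · simp
        · intro b _ hb; simp [hb]
        · simp
      rw [hsplit, hx₀ G]
      have hflip : (if col B = col A then -c else c) = -s := by
        rw [hs]
        cases hA : col A <;> cases hB1 : col B <;> cases hB2 : col B' <;> simp_all
      have hm : (m G e : ℤ) = (if G = B' then 1 else 0) + (if G = B then 1 else 0) := by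
        by_cases h' : G = B' <;> by_cases h'' : G = B <;> simp_all [hzero]
      have e1 : (if G = B' then s else 0) = (if G = B' then (1:ℤ) else 0) * s := by
        split <;> simp
      have e2 : (if G = B then -s else 0) = (if G = B then (1:ℤ) else 0) * (-s) := by
        split <;> simp
      rw [hflip, e1, e2, hm]
      ring

/-- Combinatorial core of the gluing step on a broken torus.  Let `G` be a
finite connected planar multigraph on `S²`, given by its edges `E` and faces `F`, with
faces properly 2-colored by `col`, and incidence multiplicities `m G e` (how many times
edge `e` appears on the boundary of face `G`); on `S²` every edge lies on exactly two
distinct faces of different colors, once each.  Connectivity of the face-adjacency graph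
is assumed.  If an integer `q G` is assigned to each face and the totals of the two color
classes agree, then the numbers can be distributed to edges: there is `x : E → ℤ` with
`∑_{e ∈ ∂G} x e = q G` for every face `G`. -/
theorem stmt12 (E F : Type) [Fintype E] [Fintype F] [DecidableEq F]
    (col : F → Bool) (m : F → E → ℕ) (q : F → ℤ)
    (hedge : ∀ e : E, ∃ F₁ F₂ : F, F₁ ≠ F₂ ∧ col F₁ ≠ col F₂ ∧
      m F₁ e = 1 ∧ m F₂ e = 1 ∧ ∀ G : F, G ≠ F₁ → G ≠ F₂ → m G e = 0)
    (hconn : ∀ F₁ F₂ : F,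
      Relation.ReflTransGen (fun A B : F => ∃ e : E, m A e ≠ 0 ∧ m B e ≠ 0) F₁ F₂)
    (hbal : ∑ G : F, (if col G then q G else 0) = ∑ G : F, (if col G then 0 else q G)) :
    ∃ x : E → ℤ, ∀ G : F, ∑ e : E, (m G e : ℤ) * x e = q G := by
  classical
  by_cases hF : Nonempty F
  · obtain ⟨A₀⟩ := hF
    choose xf hxf using fun G : F => transfer E F col m hedge G A₀ (hconn G A₀) (q G)
    refine ⟨fun e => ∑ G : F, xf G e, fun H => ?_⟩
    have hswap : ∑ e : E, (m H e : ℤ) * ∑ G : F, xf G e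
        = ∑ G : F, ∑ e : E, (m H e : ℤ) * xf G e := by
      simp_rw [Finset.mul_sum]
      exact Finset.sum_comm
    rw [hswap]
    have hzero : ∑ G : F, (if col A₀ = col G then -(q G) else q G) = 0 := by
      cases hA : col A₀
      · have : ∀ G : F, (if false = col G then -(q G) else q G)
            = (if col G then q G else 0) - (if col G then 0 else q G) := by
          intro G; cases h : col G <;> simp [h]
        simp_rw [this]
        rw [Finset.sum_sub_distrib, hbal, sub_self]
      · have : ∀ G : F, (if true = col G then -(q G) else q G)
            = (if col G then 0 else q G) - (if col G then q G else 0) := by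
          intro G; cases h : col G <;> simp [h]
        simp_rw [this]
        rw [Finset.sum_sub_distrib, hbal, sub_self]
    calc ∑ G : F, ∑ e : E, (m H e : ℤ) * xf G e
        = ∑ G : F, ((if H = G then q G else 0)
            + (if H = A₀ then (if col A₀ = col G then -(q G) else q G) else 0)) := by
          refine Finset.sum_congr rfl fun G _ => ?_
          exact hxf G H
      _ = q H := by
          rw [Finset.sum_add_distrib, Finset.sum_ite_eq]
          by_cases hH : H = A₀ <;> simp [hH, hzero]
  · exact ⟨0, fun G => absurd ⟨G⟩ hF⟩
end
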